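/- arXiv:1509.06298 — 5 statements merged into one kernel-verified Lean document; each statement's English description precedes it below -/
import Mathlib

section
/- Let P be a finite atomic lattice and let M = {m_p} be a labeling of elements of P by monomials in a polynomial ring such that (C1) every meet-irreducible element of P receives a nontrivial monomial label, and (C2) whenever gcd(m_p, m_q) ≠ 1 for two labeled elements p, q, the elements p and q are comparable in P. Then the monomial ideal M_M generated by x(a) = ∏_{p ∈ (⌈a⌉)^c} m_p, for a ranging over the atoms of P, has lcm lattice isomorphic to P. -/
open scoped Classical

/-- Monomials in variables `V`, represented by exponent vectors.
Multiplication is `+`, divisibility is `≤`, gcd is `⊓`, lcm is `⊔`, and the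
trivial monomial `1` is `0`. -/
abbrev Monomial (V : Type*) := V →₀ ℕ

/-- An element `x` is meet-irreducible if `x ≠ ⊤` and `x ≠ a ⊓ b` for all `a, b > x`. -/
def MeetIrred {P : Type*} [Lattice P] [OrderTop P] (x : P) : Prop :=
  x ≠ ⊤ ∧ ∀ a b : P, x < a → x < b → x ≠ a ⊓ b

/-- A finite lattice is atomic if every element other than `⊥` is the join of
the atoms below it. -/
def IsFinAtomic (P : Type*) [Lattice P] [BoundedOrder P] : Prop :=
  ∀ p : P, p ≠ ⊥ → IsLUB {a : P | IsAtom a ∧ a ≤ p} p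

/-- The monomial `x(a) = ∏_{p ∈ (⌈a⌉)ᶜ} m_p` attached to `a` by a labeling `m`. -/
noncomputable def coordGen {P V : Type*} [PartialOrder P] [Fintype P]
    (m : P → Monomial V) (a : P) : Monomial V :=
  ∑ p ∈ Finset.univ.filter (fun p : P => ¬ a ≤ p), m p

/-- The lcm lattice of a finite family of monomials: all least common multiples
of subsets of the family (the empty lcm being `1`), ordered by divisibility. -/
abbrev LcmLat {ι V : Type*} [Fintype ι] (g : ι → Monomial V) : Type _ :=
  {l : Monomial V // ∃ s : Finset ι, l = s.sup g}

/-- Condition (C1): every meet-irreducible element has a nontrivial label. -/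
def CondC1 {P V : Type*} [Lattice P] [BoundedOrder P] (m : P → Monomial V) : Prop :=
  ∀ p : P, MeetIrred p → m p ≠ 0

/-- Condition (C2): labels with a common variable sit on comparable elements. -/
def CondC2 {P V : Type*} [PartialOrder P] (m : P → Monomial V) : Prop :=
  ∀ p q : P, m p ⊓ m q ≠ 0 → p ≤ q ∨ q ≤ p

/-- A labeling is a coordinatization if the lcm lattice of the ideal generated
by the monomials `x(a)`, for `a` ranging over the atoms, is isomorphic to `P`. -/
def IsCoordinatization {P V : Type*} [PartialOrder P] [OrderBot P] [Fintype P]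
    (m : P → Monomial V) : Prop :=
  Nonempty (P ≃o LcmLat (fun a : {a : P // IsAtom a} => coordGen m a.val))

/-! By (C2), for each variable `v` the elements whose label involves `v` form a chain, and the
exponent of `v` in `x(a)` is the sum of their exponents over the part of that chain not above
`a`. On a chain, the parts not above `a`, resp. `b`, are nested, so `x(a ∨ b) = lcm(x(a), x(b))`
and `a ↦ x(a)` is a join-homomorphism. It also reflects the order: if `p ≰ p'`, a maximal
element `q ≥ p'` with `p ≰ q` is meet-irreducible, and a variable of `m_q` (which exists by
(C1)) occurs strictly more often in `x(p)` than in `x(p')`. Since every element of `P` is the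
join of the atoms below it, `a ↦ x(a)` is then an order isomorphism onto the lcm lattice. -/

theorem IsChain.forall_le_imp_le_or {α : Type*} [Preorder α] {s : Set α}
    (hs : IsChain (· ≤ ·) s) (a b : α) :
    (∀ p ∈ s, a ≤ p → b ≤ p) ∨ (∀ p ∈ s, b ≤ p → a ≤ p) := by
  by_contra! ⟨⟨p, hp, hap, hbp⟩, ⟨q, hq, hbq, haq⟩⟩
  rcases hs.total hp hq with hpq | hqp
  · exact haq (hap.trans hpq)
  · exact hbp (hbq.trans hqp)

theorem exists_meetIrred_le_not_le {P : Type*} [Lattice P] [OrderTop P] [Finite P] {p p' : P}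
    (h : ¬ p ≤ p') : ∃ q, MeetIrred q ∧ p' ≤ q ∧ ¬ p ≤ q := by
  obtain ⟨q, ⟨hp'q, hpq⟩, hmax⟩ :=
    Set.Finite.exists_maximalFor id {x : P | p' ≤ x ∧ ¬ p ≤ x} (Set.toFinite _) ⟨p', le_rfl, h⟩
  have above : ∀ a, q < a → p ≤ a := fun a hqa => by
    by_contra hpa
    exact hqa.not_ge (hmax ⟨hp'q.trans hqa.le, hpa⟩ hqa.le)
  refine ⟨q, ⟨fun hq => hpq (hq ▸ le_top), fun a b hqa hqb hq => ?_⟩, hp'q, hpq⟩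
  exact hpq (hq ▸ le_inf (above a hqa) (above b hqb))

theorem IsFinAtomic.sup_atoms_le_eq_self {P : Type*} [Lattice P] [BoundedOrder P] [Fintype P]
    (hP : IsFinAtomic P) (p : P) :
    (Finset.univ.filter fun a : {a : P // IsAtom a} => a.val ≤ p).sup Subtype.val = p := by
  refine le_antisymm (Finset.sup_le fun a ha => (Finset.mem_filter.mp ha).2) ?_
  by_cases hp : p = ⊥
  · exact hp ▸ bot_le
  · exact (hP p hp).2 fun a ⟨ha, hap⟩ =>
      Finset.le_sup (f := Subtype.val) (Finset.mem_filter.mpr ⟨Finset.mem_univ ⟨a, ha⟩, hap⟩)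

theorem CondC2.isChain_support {P V : Type*} [PartialOrder P] {m : P → Monomial V}
    (h2 : CondC2 m) (v : V) : IsChain (· ≤ ·) {p | m p v ≠ 0} := by
  intro p (hp : m p v ≠ 0) q (hq : m q v ≠ 0) _
  refine h2 p q fun h => ?_
  have : min (m p v) (m q v) = 0 := by rw [← Finsupp.inf_apply, h, Finsupp.zero_apply]
  omega

section PartialOrder

variable {P V : Type*} [PartialOrder P] [Fintype P]

theorem coordGen_apply (m : P → Monomial V) (a : P) (v : V) :
    coordGen m a v = ∑ p ∈ Finset.univ.filter (fun p : P => ¬ a ≤ p), m p v :=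
  Finset.sum_apply' v

theorem coordGen_mono (m : P → Monomial V) : Monotone (coordGen m) := fun _ _ hab =>
  Finset.sum_le_sum_of_subset <| Finset.monotone_filter_right _ fun _ _ h h' => h (hab.trans h')

theorem coordGen_bot [OrderBot P] (m : P → Monomial V) : coordGen m ⊥ = 0 := by
  simp [coordGen]

theorem coordGen_apply_le_of_forall {m : P → Monomial V} {a b : P} {v : V}
    (h : ∀ p, m p v ≠ 0 → b ≤ p → a ≤ p) : coordGen m a v ≤ coordGen m b v := by
  rw [coordGen_apply, coordGen_apply]
  refine Finset.sum_le_sum_of_ne_zero fun p hp hpv => ?_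
  simp only [Finset.mem_filter, Finset.mem_univ, true_and] at hp ⊢
  exact fun hbp => hp (h p hpv hbp)

end PartialOrder

section Lattice

variable {P V : Type*} [Lattice P] [Fintype P] {m : P → Monomial V}

theorem coordGen_sup (h2 : CondC2 m) (a b : P) :
    coordGen m (a ⊔ b) = coordGen m a ⊔ coordGen m b := by
  refine le_antisymm (fun v => ?_)
    (sup_le (coordGen_mono m le_sup_left) (coordGen_mono m le_sup_right))
  rw [Finsupp.sup_apply]
  rcases (h2.isChain_support v).forall_le_imp_le_or a b with hab | hba
  · exact (coordGen_apply_le_of_forall fun p hp hap => sup_le hap (hab p hp hap)).trans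
      le_sup_left
  · exact (coordGen_apply_le_of_forall fun p hp hbp => sup_le (hba p hp hbp) hbp).trans
      le_sup_right

theorem coordGen_finset_sup {ι : Type*} [OrderBot P] (h2 : CondC2 m) (s : Finset ι)
    (f : ι → P) :
    coordGen m (s.sup f) = s.sup (coordGen m ∘ f) :=
  Finset.apply_sup_eq_sup_comp _ (coordGen_sup h2) (coordGen_bot m)

theorem le_of_coordGen_le [BoundedOrder P] (h1 : CondC1 m) (h2 : CondC2 m) {p p' : P}
    (h : coordGen m p ≤ coordGen m p') : p ≤ p' := by
  by_contra hpp'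
  obtain ⟨q, hq, hp'q, hpq⟩ := exists_meetIrred_le_not_le hpp'
  obtain ⟨v, hqv⟩ : ∃ v, m q v ≠ 0 := Finsupp.ne_iff.mp (h1 q hq)
  -- every `r` counted in `x(p')` is comparable to `q`, hence also counted in `x(p)`
  have hsub : ∀ r ∈ insert q (Finset.univ.filter fun r : P => ¬ p' ≤ r), m r v ≠ 0 →
      r ∈ Finset.univ.filter fun r : P => ¬ p ≤ r := by
    intro r hr hrv
    simp only [Finset.mem_insert, Finset.mem_filter, Finset.mem_univ, true_and] at hr ⊢
    rcases hr with rfl | hp'r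
    · exact hpq
    rcases (h2.isChain_support v).total hrv hqv with hrq | hqr
    · exact fun hpr => hpq (hpr.trans hrq)
    · exact fun _ => hp'r (hp'q.trans hqr)
  have hlt : m q v + coordGen m p' v ≤ coordGen m p v := by
    rw [coordGen_apply, coordGen_apply,
      ← Finset.sum_insert (f := fun r => m r v) (by simpa using hp'q)]
    exact Finset.sum_le_sum_of_ne_zero hsub
  have := h v
  omega

end Lattice

/-- Theorem 3.2 of Mapes: a labeling of a finite atomic lattice
satisfying (C1) and (C2) is a coordinatization, i.e. the lcm lattice of the
ideal generated by the `x(a)` is isomorphic to `P`. -/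
theorem stmt0 {P V : Type*} [Lattice P] [BoundedOrder P] [Fintype P]
    (hP : IsFinAtomic P) (m : P → Monomial V)
    (h1 : CondC1 m) (h2 : CondC2 m) :
    IsCoordinatization m := by
  have hgen : ∀ s : Finset {a : P // IsAtom a},
      s.sup (fun a => coordGen m a.val) = coordGen m (s.sup Subtype.val) := fun s =>
    (coordGen_finset_sup h2 s Subtype.val).symm
  let φ : P ↪o LcmLat (fun a : {a : P // IsAtom a} => coordGen m a.val) :=
    OrderEmbedding.ofMapLEIff
      (fun p => ⟨coordGen m p, _, by rw [hgen, hP.sup_atoms_le_eq_self p]⟩)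
      fun _ _ => ⟨le_of_coordGen_le h1 h2, fun h => coordGen_mono m h⟩
  refine ⟨OrderIso.ofSurjective φ ?_⟩
  rintro ⟨_, s, rfl⟩
  exact ⟨s.sup Subtype.val, Subtype.ext (hgen s).symm⟩
end

section
/- Let M be a monomial ideal with lcm lattice L_M, and let P be the abstract finite atomic lattice isomorphic to L_M. Define the deficit labeling D on P by m_p = gcd{ l_t : t > p } / l_p, where l_p denotes the monomial in L_M corresponding to p, and for p = 1̂ the gcd over the empty set is defined to be l_{1̂}. Then D is a coordinatization of P and the resulting monomial ideal M_{P,D} equals M. -/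
open scoped Classical

section LcmLatInstances

variable {ι V : Type*} [Fintype ι] (g : ι → Monomial V)

instance : Finite (LcmLat g) :=
  Finite.of_surjective (fun s : Finset ι => (⟨s.sup g, s, rfl⟩ : LcmLat g))
    (fun l => by obtain ⟨s, hs⟩ := l.2; exact ⟨s, Subtype.ext hs.symm⟩)

noncomputable instance : Fintype (LcmLat g) := Fintype.ofFinite _

instance : OrderBot (LcmLat g) where
  bot := ⟨⊥, ∅, Finset.sup_empty.symm⟩
  bot_le := fun l => by exact bot_le (a := l.val)

/-- The monomial corresponding to `p` in the lcm lattice. -/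
def lcmVal (p : LcmLat g) : Monomial V := p.val

/-- `gcd { l_t : t > p }` in the lcm lattice, with the convention that for
`p = 1̂` (where the set above is empty) it equals `l_{1̂}`. -/
noncomputable def lcmGcdAbove (p : LcmLat g) : Monomial V :=
  if h : (Finset.univ.filter (fun t : LcmLat g => p < t)).Nonempty
  then (Finset.univ.filter (fun t : LcmLat g => p < t)).inf' h (lcmVal g)
  else lcmVal g p

/-- The deficit labeling `D` on the lcm lattice: `m_p = gcd{ l_t : t > p } / l_p`. -/
noncomputable def lcmDeficit (p : LcmLat g) : Monomial V :=
  lcmGcdAbove g p - lcmVal g p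

end LcmLatInstances


/-!
Fix a variable `v` and read every element `c` of the lcm lattice through its exponent
`f c` of `v`; then `f` preserves joins. For each level `n` with `0 < n ≤ f 1̂`, the elements
with `f c < n` are closed under joins, so they have a largest one `c_n`, and the `v`-exponent
of the deficit label of `c` counts exactly the levels `n` with `c = c_n`. Since `q ≤ c_n`
iff `f q < n`, summing the labels over the elements `c` with `q ≰ c` counts the levels
`n ≤ f q`, which gives back `f q`. Hence `x(a) = l_a` for every atom `a`, and the atoms of the
lcm lattice are the minimal generators.
-/

open Finset

section Sublevel

variable {P : Type*} [SemilatticeSup P] [OrderBot P] [Fintype P] (f : SupHom P ℕ)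

noncomputable def gapAbove (p : P) : ℕ :=
  if h : (univ.filter (p < ·)).Nonempty then (univ.filter (p < ·)).inf' h f - f p else 0

noncomputable def sublevelSup (n : ℕ) : P := (univ.filter (f · < n)).sup id

variable {f}

lemma le_sublevelSup {c : P} {n : ℕ} (h : f c < n) : c ≤ sublevelSup f n :=
  le_sup (f := id) (by simpa using h)

lemma apply_sublevelSup_lt {n : ℕ} (h : f ⊥ < n) : f (sublevelSup f n) < n :=
  sup_induction (p := (f · < n)) h (fun a ha b hb => by rw [map_sup]; exact max_lt ha hb)
    (fun c hc => by simpa using hc)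

lemma le_sublevelSup_iff {n : ℕ} (h : f ⊥ < n) {q : P} : q ≤ sublevelSup f n ↔ f q < n :=
  ⟨fun hq => (OrderHomClass.mono f hq).trans_lt (apply_sublevelSup_lt h), le_sublevelSup⟩

lemma eq_sublevelSup_iff {n : ℕ} (h : f ⊥ < n) {p : P} :
    p = sublevelSup f n ↔ f p < n ∧ ∀ t, p < t → n ≤ f t := by
  constructor
  · rintro rfl
    exact ⟨apply_sublevelSup_lt h,
      fun t ht => not_lt.1 fun htn => (le_sublevelSup htn).not_gt ht⟩
  · rintro ⟨hp, hup⟩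
    exact (le_sublevelSup hp).eq_of_not_lt fun hlt => (hup _ hlt).not_gt (apply_sublevelSup_lt h)

lemma gapAbove_eq_card (p : P) :
    gapAbove f p = #{n ∈ Ioc (f ⊥) (univ.sup f) | p = sublevelSup f n} := by
  have hbot : f ⊥ ≤ f p := OrderHomClass.mono f bot_le
  unfold gapAbove
  split_ifs with hne
  · set m := (univ.filter (p < ·)).inf' hne f
    have hmN : m ≤ univ.sup f := by
      obtain ⟨t, ht⟩ := hne
      exact (inf'_le _ ht).trans (le_sup (mem_univ t))
    rw [← Nat.card_Ioc, eq_comm]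
    refine congrArg card (ext fun n => ?_)
    simp only [mem_Ioc, mem_filter]
    constructor
    · rintro ⟨⟨hn, -⟩, hpn⟩
      obtain ⟨hp, hup⟩ := (eq_sublevelSup_iff hn).1 hpn
      exact ⟨hp, (le_inf'_iff _ _).2 fun t ht => hup t (by simpa using ht)⟩
    · rintro ⟨hp, hnm⟩
      refine ⟨⟨hbot.trans_lt hp, hnm.trans hmN⟩,
        (eq_sublevelSup_iff (hbot.trans_lt hp)).2 ⟨hp, fun t ht => ?_⟩⟩
      exact (le_inf'_iff _ _).1 hnm t (by simpa using ht)
  · have hsup : univ.sup f ≤ f p := Finset.sup_le fun t _ => OrderHomClass.mono f <|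
      not_not.1 fun htp => hne ⟨p ⊔ t, by simpa [left_lt_sup] using htp⟩
    rw [eq_comm, card_eq_zero, filter_eq_empty_iff]
    rintro n hn rfl
    have := apply_sublevelSup_lt (mem_Ioc.1 hn).1
    have := (mem_Ioc.1 hn).2
    omega

theorem sum_gapAbove_filter_not_le (q : P) :
    ∑ c with ¬ q ≤ c, gapAbove f c = f q - f ⊥ := by
  simp_rw [gapAbove_eq_card, card_filter]
  rw [sum_comm]
  simp_rw [sum_ite_eq', mem_filter, mem_univ, true_and]
  rw [← card_filter, ← Nat.card_Ioc]
  refine congrArg card (ext fun n => ?_)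
  simp only [mem_filter, mem_Ioc]
  have hq : f q ≤ univ.sup f := le_sup (mem_univ q)
  constructor
  · rintro ⟨⟨hn, -⟩, hqn⟩
    exact ⟨hn, not_lt.1 (mt (le_sublevelSup_iff hn).2 hqn)⟩
  · rintro ⟨hn, hnq⟩
    exact ⟨⟨hn, hnq.trans hq⟩, by rw [le_sublevelSup_iff hn]; omega⟩

end Sublevel

theorem Finset.exists_sup_eq_of_range_subset {ι κ α : Type*} [SemilatticeSup α] [OrderBot α]
    {g : ι → α} {g' : κ → α} (h : Set.range g ⊆ Set.range g') (s : Finset ι) :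
    ∃ t : Finset κ, s.sup g = t.sup g' := by
  choose e he using fun i => h ⟨i, rfl⟩
  exact ⟨s.image e, by rw [sup_image]; exact sup_congr rfl fun i _ => (he i).symm⟩

namespace LcmLat

variable {ι V : Type*} [Fintype ι] (g : ι → Monomial V)

noncomputable instance : SemilatticeSup (LcmLat g) :=
  Subtype.semilatticeSup fun _ _ ⟨s, hs⟩ ⟨t, ht⟩ => ⟨s ∪ t, by rw [sup_union, hs, ht]⟩

def exponent (v : V) : SupHom (LcmLat g) ℕ where
  toFun c := c.val v
  map_sup' _ _ := rfl

lemma lcmDeficit_apply (p : LcmLat g) (v : V) :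
    lcmDeficit g p v = gapAbove (exponent g v) p := by
  unfold lcmDeficit lcmGcdAbove gapAbove
  rw [Finsupp.tsub_apply]
  -- the two filters differ only in their (subsingleton) `Decidable` instances
  split_ifs with h₁ h₂ h₂
  · rw [apply_inf'_eq_inf'_comp h₁ (fun m : Monomial V => m v) fun _ _ => rfl]
    congr!
  · exact absurd (by convert h₁) h₂
  · exact absurd (by convert h₂) h₁
  · exact tsub_self _

theorem coordGen_lcmDeficit (q : LcmLat g) : coordGen (lcmDeficit g) q = q.val := by
  ext v
  rw [coordGen, Finsupp.finsetSum_apply]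
  simp_rw [lcmDeficit_apply]
  rw [sum_gapAbove_filter_not_le]
  rfl

def congr {κ : Type*} [Fintype κ] {g' : κ → Monomial V} (h : Set.range g = Set.range g') :
    LcmLat g ≃o LcmLat g' where
  toEquiv := Equiv.subtypeEquivRight fun _ =>
    ⟨fun ⟨s, hs⟩ => hs ▸ exists_sup_eq_of_range_subset h.le s,
      fun ⟨t, ht⟩ => ht ▸ exists_sup_eq_of_range_subset h.ge t⟩
  map_rel_iff' := Iff.rfl

def generator (i : ι) : LcmLat g := ⟨g i, {i}, sup_singleton.symm⟩

variable {g}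

lemma isAtom_iff_exists_eq_generator (hne : ∀ i, g i ≠ 0)
    (hmin : ∀ i j, g i ≤ g j → i = j) (a : LcmLat g) :
    IsAtom a ↔ ∃ i, a = generator g i := by
  have generator_ne_bot (i : ι) : generator g i ≠ ⊥ := fun h => hne i (congrArg Subtype.val h)
  constructor
  · intro ha
    obtain ⟨s, hs⟩ := a.2
    obtain ⟨i, hi⟩ : s.Nonempty :=
      nonempty_iff_ne_empty.2 fun h => ha.1 (Subtype.ext (by rw [hs, h]; rfl))
    have hia : generator g i ≤ a := Subtype.coe_le_coe.1 (hs ▸ le_sup hi)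
    exact ⟨i, ((ha.le_iff.1 hia).resolve_left (generator_ne_bot i)).symm⟩
  · rintro ⟨i, rfl⟩
    refine ⟨generator_ne_bot i, fun b hb => ?_⟩
    obtain ⟨s, hs⟩ := b.2
    rcases s.eq_empty_or_nonempty with rfl | ⟨j, hj⟩
    · exact Subtype.ext hs
    · have hjb : g j ≤ b.val := hs ▸ le_sup hj
      obtain rfl := hmin j i (hjb.trans hb.le)
      exact ((Subtype.coe_lt_coe.2 hb : b.val < g j).not_ge hjb).elim

lemma range_atom_val (hne : ∀ i, g i ≠ 0) (hmin : ∀ i j, g i ≤ g j → i = j) :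
    Set.range (fun a : {a : LcmLat g // IsAtom a} => a.val.val) = Set.range g := by
  ext l
  constructor
  · rintro ⟨⟨a, ha⟩, rfl⟩
    obtain ⟨i, rfl⟩ := (isAtom_iff_exists_eq_generator hne hmin a).1 ha
    exact ⟨i, rfl⟩
  · rintro ⟨i, rfl⟩
    exact ⟨⟨generator g i, (isAtom_iff_exists_eq_generator hne hmin _).2 ⟨i, rfl⟩⟩, rfl⟩

end LcmLat

/-- Proposition 3.6 of Mapes: for a monomial ideal with minimal
generators `g`, the deficit labeling of its lcm lattice is a coordinatization,
and the resulting monomial ideal equals the original one (the coordinatization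
monomials of the atoms are exactly the original minimal generators). -/
theorem stmt2 {ι V : Type*} [Fintype ι] (g : ι → Monomial V)
    (hne : ∀ i, g i ≠ 0) (hmin : ∀ i j, g i ≤ g j → i = j) :
    IsCoordinatization (lcmDeficit g) ∧
      (Set.range fun a : {a : LcmLat g // IsAtom a} => coordGen (lcmDeficit g) a.val)
        = Set.range g := by
  have hrange : (Set.range fun a : {a : LcmLat g // IsAtom a} => coordGen (lcmDeficit g) a.val)
      = Set.range g := by
    simp_rw [LcmLat.coordGen_lcmDeficit]
    exact LcmLat.range_atom_val hne hmin
  exact ⟨⟨LcmLat.congr g hrange.symm⟩, hrange⟩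
end

section
/- Let Δ be a simplicial complex with distinct variables x_σ assigned to faces σ, and for each vertex v define m'_v to be the squarefree monomial whose variables are: x_{G−{v}} for each facet G containing v, together with x_F and x_τ for each facet F not containing v and each codimension-one face τ of F. Let a_v be the atom of the augmented face poset P_Δ corresponding to v and let x(a_v) = ∏_{p ∈ (⌈a_v⌉)^c} m_p for the labeling F_Δ assigning x_σ to each facet σ and each codimension-one face σ of a facet. Then a variable x divides m'_v if and only if x divides x(a_v); hence the ideal (m'_v : v) equals the ideal generated by the x(a_v). -/
open scoped Classical

section Simplicial

variable {V : Type*} [Fintype V] (Δ : Finset V → Prop)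

/-- The augmented face poset of a simplicial complex: the poset of faces
(ordered by inclusion, with the empty face as minimum) with a maximum adjoined. -/
abbrev FacePoset := WithTop {s : Finset V // Δ s}


noncomputable instance : Fintype {s : Finset V // Δ s} := Fintype.ofFinite _

noncomputable instance : Fintype (FacePoset Δ) :=
  Fintype.ofEquiv (Option {s : Finset V // Δ s}) (Equiv.refl _)

/-- Order-theoretic meet-irreducibility: `x ≠ ⊤` and `x` is not the greatest
lower bound of two strictly larger elements. -/
def MeetIrredOrd {P : Type*} [PartialOrder P] [OrderTop P] (x : P) : Prop :=
  x ≠ ⊤ ∧ ∀ a b : P, x < a → x < b → ¬ IsGLB {a, b} x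

/-- `p` contains the vertex `v` (i.e. the atom of `v` lies below `p`). -/
def containsVert (p : FacePoset Δ) (v : V) : Prop :=
  p = ⊤ ∨ ∃ σ : {s : Finset V // Δ s}, p = ↑σ ∧ v ∈ σ.val

end Simplicial

section Faridi

variable {V : Type*} [Fintype V] (Δ : Finset V → Prop)

/-- A facet: a maximal face of `Δ`. -/
def IsFacet (s : Finset V) : Prop := Δ s ∧ ∀ t, Δ t → s ⊆ t → s = t

/-- A codimension-one face of some facet of `Δ`. -/
def IsCodimOne (s : Finset V) : Prop :=
  ∃ G, IsFacet Δ G ∧ s ⊆ G ∧ s.card + 1 = G.card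

/-- Variables: one distinct variable `x_σ` for each face `σ` of `Δ`. -/
abbrev FVar := {s : Finset V // Δ s}

/-- Faridi's labeling `F_Δ`: label each facet and each codimension-one face of
a facet with its own distinct variable; all other elements are unlabeled. -/
noncomputable def faridiLab : FacePoset Δ → Monomial (FVar Δ) :=
  fun x => WithTop.recTopCoe 0
    (fun σ => if IsFacet Δ σ.val ∨ IsCodimOne Δ σ.val then Finsupp.single σ 1 else 0) x

/-- The coordinatization monomial `x(a_v) = ∏_{p ∈ (⌈a_v⌉)ᶜ} m_p` of the vertex
`v` for the labeling `F_Δ`. -/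
noncomputable def faridiGen (v : V) : Monomial (FVar Δ) :=
  ∑ p ∈ Finset.univ.filter (fun p : FacePoset Δ => ¬ containsVert Δ p v),
    faridiLab Δ p

end Faridi

/-- Faridi's generator `m'_v`: the squarefree monomial whose variables are
`x_{G − {v}}` for each facet `G` containing `v`, together with `x_F` and `x_τ`
for each facet `F` not containing `v` and each codimension-one face `τ` of `F`. -/
noncomputable def mFar {V : Type*} [Fintype V] (Δ : Finset V → Prop) (v : V) :
    Monomial (FVar Δ) :=
  ∑ σ ∈ Finset.univ.filter (fun σ : FVar Δ =>
      (∃ G, IsFacet Δ G ∧ v ∈ G ∧ σ.val = G.erase v) ∨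
      (∃ F, IsFacet Δ F ∧ v ∉ F ∧
        (σ.val = F ∨ (σ.val ⊆ F ∧ σ.val.card + 1 = F.card)))),
    Finsupp.single σ 1

lemma mFar_apply {V : Type*} [Fintype V] (Δ : Finset V → Prop) (v : V) (σ : FVar Δ) :
    mFar Δ v σ = if ((∃ G, IsFacet Δ G ∧ v ∈ G ∧ σ.val = G.erase v) ∨
      (∃ F, IsFacet Δ F ∧ v ∉ F ∧
        (σ.val = F ∨ (σ.val ⊆ F ∧ σ.val.card + 1 = F.card)))) then 1 else 0 := by
  rw [mFar, Finsupp.finset_sum_apply]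
  simp only [Finsupp.single_apply]
  rw [Finset.sum_ite_eq' (Finset.univ.filter _) σ (fun _ => 1)]
  simp

lemma faridiGen_apply {V : Type*} [Fintype V] (Δ : Finset V → Prop) (v : V)
    (σ : FVar Δ) :
    faridiGen Δ v σ = if (v ∉ σ.val ∧ (IsFacet Δ σ.val ∨ IsCodimOne Δ σ.val))
      then 1 else 0 := by
  have hcv : containsVert Δ (↑σ : FacePoset Δ) v ↔ v ∈ σ.val := by
    constructor
    · rintro (h | ⟨τ, hτ, hv⟩)
      · exact absurd h WithTop.coe_ne_top
      · rw [WithTop.coe_inj] at hτ; exact hτ ▸ hv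
    · intro h; exact Or.inr ⟨σ, rfl, h⟩
  rw [faridiGen, Finsupp.finset_sum_apply]
  by_cases hv : v ∈ σ.val
  · rw [if_neg (by simp [hv])]
    apply Finset.sum_eq_zero
    intro p hp
    simp only [Finset.mem_filter, Finset.mem_univ, true_and] at hp
    induction p using WithTop.recTopCoe with
    | top => simp [faridiLab]
    | coe τ =>
      have hτσ : τ ≠ σ := by rintro rfl; exact hp (hcv.mpr hv)
      simp only [faridiLab, WithTop.recTopCoe_coe]
      split <;> simp [Finsupp.single_apply, hτσ]
  · rw [Finset.sum_eq_single_of_mem (↑σ : FacePoset Δ)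
      (by simp [Finset.mem_filter, hcv, hv])]
    · simp only [faridiLab, WithTop.recTopCoe_coe]
      split <;> simp_all [Finsupp.single_apply]
    · intro p hp hpσ
      induction p using WithTop.recTopCoe with
      | top => simp [faridiLab]
      | coe τ =>
        have hτσ : τ ≠ σ := fun h => hpσ (by rw [h])
        simp only [faridiLab, WithTop.recTopCoe_coe]
        split <;> simp [Finsupp.single_apply, hτσ]

lemma cond_iff {V : Type*} [Fintype V] (Δ : Finset V → Prop) (v : V) (σ : FVar Δ) :
    ((∃ G, IsFacet Δ G ∧ v ∈ G ∧ σ.val = G.erase v) ∨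
      (∃ F, IsFacet Δ F ∧ v ∉ F ∧
        (σ.val = F ∨ (σ.val ⊆ F ∧ σ.val.card + 1 = F.card)))) ↔
    (v ∉ σ.val ∧ (IsFacet Δ σ.val ∨ IsCodimOne Δ σ.val)) := by
  constructor
  · rintro (⟨G, hG, hvG, hσ⟩ | ⟨F, hF, hvF, (rfl | ⟨hsub, hcard⟩)⟩)
    · refine ⟨hσ ▸ Finset.notMem_erase v G, Or.inr ⟨G, hG, ?_, ?_⟩⟩
      · exact hσ ▸ Finset.erase_subset v G
      · rw [hσ, Finset.card_erase_add_one hvG]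
    · exact ⟨hvF, Or.inl hF⟩
    · exact ⟨fun h => hvF (hsub h), Or.inr ⟨F, hF, hsub, hcard⟩⟩
  · rintro ⟨hv, (hfac | ⟨G, hG, hsub, hcard⟩)⟩
    · exact Or.inr ⟨σ.val, hfac, hv, Or.inl rfl⟩
    · by_cases hvG : v ∈ G
      · refine Or.inl ⟨G, hG, hvG, ?_⟩
        apply Finset.eq_of_subset_of_card_le (Finset.subset_erase.mpr ⟨hsub, hv⟩)
        rw [Finset.card_erase_of_mem hvG]
        omega
      · exact Or.inr ⟨G, hG, hvG, Or.inr ⟨hsub, hcard⟩⟩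

/-- a variable `x` divides `m'_v` if and only if it divides the
coordinatization monomial `x(a_v)` of the labeling `F_Δ`; hence the ideal
`(m'_v : v)` equals the ideal generated by the `x(a_v)` (the generators agree). -/
theorem stmt7 {V : Type*} [Fintype V] (Δ : Finset V → Prop)
    (hdown : ∀ s t : Finset V, t ⊆ s → Δ s → Δ t)
    (hempty : Δ ∅) (hvert : ∀ v : V, Δ {v}) :
    (∀ (v : V) (σ : FVar Δ), mFar Δ v σ ≠ 0 ↔ faridiGen Δ v σ ≠ 0) ∧
    (∀ v : V, mFar Δ v = faridiGen Δ v) := by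
  have key : ∀ v : V, mFar Δ v = faridiGen Δ v := by
    intro v
    ext σ
    rw [mFar_apply, faridiGen_apply, if_congr (cond_iff Δ v σ) rfl rfl]
  exact ⟨fun v σ => by rw [key v], key⟩
end

section
/- Let T be a tree and P_T the lattice of subtrees of T ordered by inclusion. The meet-irreducible elements of P_T other than 0̂ and 1̂ are exactly the subtrees T_{i,1} and T_{i,2} obtained as the two connected components of T after deleting a single edge e_i. -/
open scoped Classical

section Trees

variable {V : Type*} [Fintype V] (G : SimpleGraph V)

/-- The poset `P_T` of subtrees of `T`: finite sets of vertices whose induced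
subgraph is (pre)connected, ordered by inclusion.  This includes the empty set
and all single vertices. -/
abbrev SubtreePoset (G : SimpleGraph V) : Type _ :=
  {s : Finset V // (G.induce (↑s : Set V)).Preconnected}

noncomputable instance : Fintype (SubtreePoset G) := Fintype.ofFinite _

/-- The single-vertex subtree `{v}`, an atom of `P_T`. -/
def vertexSubtree (v : V) : SubtreePoset G :=
  ⟨{v}, by
    rintro ⟨a, ha⟩ ⟨b, hb⟩
    simp only [Finset.coe_singleton, Set.mem_singleton_iff] at ha hb
    subst ha; subst hb
    exact SimpleGraph.Reachable.refl _⟩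

/-- The empty subtree, the minimum of `P_T`. -/
def emptySubtree : SubtreePoset G :=
  ⟨∅, by rintro ⟨a, ha⟩; simp at ha⟩

end Trees

/-!
Deleting an edge `uv` of a tree leaves the component `C` of `u`, which misses `v` since `uv` is a
bridge. A subtree strictly above `C` cannot avoid `v`, for then it would lie in the component `C`;
so all of them contain the subtree `C ∪ {v}`, and `C` is not the meet of two larger subtrees.
Conversely, a subtree `p` with two distinct outside neighbours `w₁, w₂` is the meet of `p ∪ {w₁}`
and `p ∪ {w₂}`. So a meet-irreducible `p ≠ ∅, T` has a single outside neighbour `v`, joined to `p`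
by an edge `uv`, and a walk leaving `p` in `T - uv` would have to step to `v`, contradicting that
`uv` is a bridge.
-/

namespace SimpleGraph

variable {V : Type*} {G : SimpleGraph V}

lemma preconnected_induce_insert {s : Set V} (hs : (G.induce s).Preconnected) {u v : V}
    (hu : u ∈ s) (huv : G.Adj u v) : (G.induce (insert v s)).Preconnected := by
  rw [Set.insert_eq, Set.union_comm]
  exact (connected_induce_union hs .of_subsingleton hu (Set.mem_singleton v) huv).preconnected

lemma Preconnected.subset_setOf_reachable_deleteEdges {s : Set V}
    (hs : (G.induce s).Preconnected) {u v : V} (hu : u ∈ s) (hv : v ∉ s) :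
    s ⊆ {w | (G.deleteEdges {s(u, v)}).Reachable u w} := by
  intro w hw
  refine (hs ⟨u, hu⟩ ⟨w, hw⟩).map (⟨Subtype.val, ?_⟩ : G.induce s →g G.deleteEdges {s(u, v)})
  rintro ⟨a, ha⟩ ⟨b, hb⟩ hab
  refine (deleteEdges_adj ..).2 ⟨hab, ?_⟩
  simp only [Set.mem_singleton_iff, Sym2.eq_iff]
  rintro (⟨rfl, rfl⟩ | ⟨rfl, rfl⟩)
  exacts [hv hb, hv ha]

lemma IsAcyclic.not_reachable_deleteEdges (hG : G.IsAcyclic) {u v : V} (huv : G.Adj u v) :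
    ¬ (G.deleteEdges {s(u, v)}).Reachable u v :=
  isBridge_iff.mp (isAcyclic_iff_forall_adj_isBridge.mp hG huv)

end SimpleGraph

namespace SubtreePoset

open SimpleGraph

variable {V : Type*} {G : SimpleGraph V}

noncomputable def insertNeighbor (p : SubtreePoset G) {u v : V} (hu : u ∈ p.val)
    (huv : G.Adj u v) : SubtreePoset G :=
  ⟨insert v p.val, by rw [Finset.coe_insert]; exact preconnected_induce_insert p.2 hu huv⟩

lemma lt_insertNeighbor (p : SubtreePoset G) {u v : V} (hu : u ∈ p.val) (huv : G.Adj u v)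
    (hv : v ∉ p.val) : p < p.insertNeighbor hu huv :=
  Subtype.coe_lt_coe.mp (Finset.ssubset_insert hv)

lemma isGLB_pair_of_inter_subset {p a b : SubtreePoset G} (ha : p ≤ a) (hb : p ≤ b)
    (hab : a.val ∩ b.val ⊆ p.val) : IsGLB {a, b} p := by
  refine ⟨by rintro c (rfl | rfl) <;> assumption, fun c hc x hx => hab ?_⟩
  exact Finset.mem_inter.2 ⟨hc (Set.mem_insert _ _) hx, hc (Set.mem_insert_of_mem _ rfl) hx⟩

lemma not_isGLB_pair_of_mem {p a b : SubtreePoset G} {u v : V} (hu : u ∈ p.val)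
    (huv : G.Adj u v) (hv : v ∉ p.val) (hpa : p ≤ a) (hpb : p ≤ b) (hva : v ∈ a.val)
    (hvb : v ∈ b.val) : ¬ IsGLB {a, b} p := by
  intro h
  have hle : p.insertNeighbor hu huv ≤ p := h.2 <| by
    rintro c (rfl | rfl)
    exacts [Finset.insert_subset hva hpa, Finset.insert_subset hvb hpb]
  exact (lt_insertNeighbor p hu huv hv).not_ge hle

lemma eq_of_adj_of_forall_not_isGLB {p : SubtreePoset G}
    (hirr : ∀ a b : SubtreePoset G, p < a → p < b → ¬ IsGLB {a, b} p)
    {u₁ u₂ w₁ w₂ : V} (hu₁ : u₁ ∈ p.val) (hu₂ : u₂ ∈ p.val) (hw₁ : w₁ ∉ p.val)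
    (hw₂ : w₂ ∉ p.val) (h₁ : G.Adj u₁ w₁) (h₂ : G.Adj u₂ w₂) : w₁ = w₂ := by
  by_contra hne
  have hp₁ := lt_insertNeighbor p hu₁ h₁ hw₁
  have hp₂ := lt_insertNeighbor p hu₂ h₂ hw₂
  refine hirr _ _ hp₁ hp₂ (isGLB_pair_of_inter_subset hp₁.le hp₂.le fun x hx => ?_)
  simp only [insertNeighbor, Finset.mem_inter, Finset.mem_insert] at hx
  grind

theorem eq_setOf_reachable_deleteEdges_of_forall_not_isGLB (hG : G.IsAcyclic)
    {p : SubtreePoset G} (hirr : ∀ a b : SubtreePoset G, p < a → p < b → ¬ IsGLB {a, b} p)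
    {u v : V} (hu : u ∈ p.val) (hv : v ∉ p.val) (huv : G.Adj u v) :
    (↑p.val : Set V) = {w | (G.deleteEdges {s(u, v)}).Reachable u w} := by
  have hsub :=
    p.2.subset_setOf_reachable_deleteEdges (Finset.mem_coe.2 hu) (mt Finset.mem_coe.1 hv)
  refine hsub.antisymm fun z ⟨W⟩ => ?_
  by_contra hz
  obtain ⟨d, -, hd₁, hd₂⟩ := W.exists_boundary_dart _ hu hz
  have hd : d.snd = v := eq_of_adj_of_forall_not_isGLB hirr hd₁ hu hd₂ hv d.adj.1 huv
  have hreach := (hsub hd₁).trans d.adj.reachable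
  rw [hd] at hreach
  exact hG.not_reachable_deleteEdges huv hreach

theorem forall_not_isGLB_of_eq_setOf_reachable_deleteEdges (hG : G.IsAcyclic)
    {p : SubtreePoset G} {u v : V} (huv : G.Adj u v)
    (hp : (↑p.val : Set V) = {w | (G.deleteEdges {s(u, v)}).Reachable u w}) :
    ∀ a b : SubtreePoset G, p < a → p < b → ¬ IsGLB {a, b} p := by
  have hu : u ∈ (↑p.val : Set V) := by rw [hp]; exact Reachable.refl u
  have hv : v ∉ (↑p.val : Set V) := by rw [hp]; exact hG.not_reachable_deleteEdges huv
  have hmem : ∀ c : SubtreePoset G, p < c → v ∈ c.val := by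
    intro c hpc
    by_contra hvc
    refine hpc.not_ge fun w hw => Finset.mem_coe.1 ?_
    rw [hp]
    exact c.2.subset_setOf_reachable_deleteEdges (Finset.mem_coe.2 (hpc.le hu)) hvc hw
  intro a b hpa hpb
  exact not_isGLB_pair_of_mem hu huv hv hpa.le hpb.le (hmem a hpa) (hmem b hpb)

end SubtreePoset

/-- in the subtree lattice `P_T` of a tree `T`, the
meet-irreducible elements other than `0̂ = ∅` and `1̂ = T` are exactly the
connected components `T_{i,1}, T_{i,2}` of `T` with one edge `e_i` deleted.
Meet-irreducibility of `p` is expressed order-theoretically: `p` is not the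
greatest lower bound of two strictly larger elements. -/
theorem stmt9 {V : Type*} [Fintype V] (G : SimpleGraph V)
    (hconn : G.Connected) (hacyc : G.IsAcyclic) :
    ∀ p : SubtreePoset G, p.val ≠ ∅ → p.val ≠ Finset.univ →
      ((∀ a b : SubtreePoset G, p < a → p < b → ¬ IsGLB {a, b} p) ↔
        ∃ u v : V, G.Adj u v ∧
          (↑p.val : Set V) = {w | (G.deleteEdges {s(u, v)}).Reachable u w}) := by
  intro p hne huniv
  constructor
  · intro hirr
    obtain ⟨x, hx⟩ := Finset.nonempty_iff_ne_empty.mpr hne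
    obtain ⟨y, hy⟩ := not_forall.mp (mt Finset.eq_univ_iff_forall.mpr huniv)
    obtain ⟨d, -, hd₁, hd₂⟩ :=
      (hconn.preconnected x y).some.exists_boundary_dart (↑p.val) hx hy
    exact ⟨d.fst, d.snd, d.adj,
      SubtreePoset.eq_setOf_reachable_deleteEdges_of_forall_not_isGLB hacyc hirr hd₁ hd₂ d.adj⟩
  · rintro ⟨u, v, huv, hp⟩
    exact SubtreePoset.forall_not_isGLB_of_eq_setOf_reachable_deleteEdges hacyc huv hp
end

section
/- Let T be a tree with n+1 vertices and let P_T ∈ L(n+1) be its lattice of subtrees. If P ∈ L(n+1) covers P_T in the lattice L(n+1) of finite atomic lattices with n+1 ordered atoms (so P = P_T ∪ {p} for a single new element p), then the reduced homology group H̃_0 of the open interval (0̂, p) in P is nonzero; consequently the total Betti numbers of (any coordinatization of) P are strictly greater than those of P_T. -/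
open scoped Classical

/-- The comparability graph of the open interval `(b, p)` in a poset: its
connected components compute `H̃₀` of the order complex of the interval. -/
def intervalGraph {P : Type*} [PartialOrder P] (b p : P) :
    SimpleGraph {x : P // b < x ∧ x < p} where
  Adj x y := x ≠ y ∧ ((x : P) ≤ y ∨ (y : P) ≤ x)
  symm := ⟨fun x y h => ⟨h.1.symm, h.2.symm⟩⟩
  loopless := ⟨fun x h => h.1 rfl⟩

/-- The total second Betti number of a finite atomic lattice with minimum `b`:
`b₂ = Σ_p dim H̃₀(Δ(b, p))`, where `dim H̃₀` of the order complex of the open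
interval `(b, p)` is the number of connected components of its comparability
graph minus one. -/
noncomputable def bettiTwo (P : Type*) [PartialOrder P] [Fintype P] (b : P) : ℕ :=
  ∑ p : P, (Fintype.card ((intervalGraph b p).ConnectedComponent) - 1)


/-!
Let `S` be the set of vertices `v` with `{v} ≤ q₀`. Atomicity of `Q` identifies the elements
below (resp. above) `q₀` with the subtrees contained in (resp. containing) `S`; since `q₀` is
new, `S` itself is not a subtree, i.e. it is disconnected in `T`. Every element of `(0̂, q₀)` is a
nonempty subtree inside `S`, hence lies in a single component of `S`, and comparable subtrees lie
in the same one, so the comparability graph of `(0̂, q₀)` is disconnected.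

For the Betti numbers, compare the interval below `e r` in `Q` with `(∅, r)` in `P_T`. If
`q₀ ≰ e r`, the two intervals coincide. Otherwise `r ⊋ S` has at least three vertices, and then
`(∅, r)` is connected: each subtree lies above one of its vertices, and the two ends of an edge
of `r` lie below the edge, which is still a proper subtree of `r`.
-/

open SimpleGraph

namespace SimpleGraph

variable {α β : Type*}

lemma Reachable.map_of_adj {H₁ : SimpleGraph α} {H₂ : SimpleGraph β} (f : α → β)
    (hf : ∀ x y, H₁.Adj x y → H₂.Reachable (f x) (f y)) {a b : α} (h : H₁.Reachable a b) :
    H₂.Reachable (f a) (f b) := by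
  rw [reachable_iff_reflTransGen] at h ⊢
  exact Relation.ReflTransGen.lift' f
    (fun x y hxy => (reachable_iff_reflTransGen _ _).1 (hf x y hxy)) _ _ h

lemma not_preconnected_of_adj_invariant {H : SimpleGraph α} (P : α → Prop)
    (hP : ∀ x y, H.Adj x y → P x → P y) {a b : α} (ha : P a) (hb : ¬ P b) : ¬ H.Preconnected := by
  intro hH
  obtain ⟨w⟩ := hH a b
  induction w with
  | nil => exact hb ha
  | cons hadj _ ih => exact ih (hP _ _ hadj ha) hb

lemma nontrivial_of_not_preconnected {H : SimpleGraph α} (h : ¬ H.Preconnected) : Nontrivial α := by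
  by_contra hα
  rw [not_nontrivial_iff_subsingleton] at hα
  exact h fun a b => Subsingleton.elim a b ▸ Reachable.refl a

lemma one_lt_card_connectedComponent_of_not_preconnected [Finite α] {H : SimpleGraph α}
    (h : ¬ H.Preconnected) : 1 < Nat.card H.ConnectedComponent := by
  simp only [Preconnected, not_forall] at h
  obtain ⟨a, b, hab⟩ := h
  exact Finite.one_lt_card_iff_nontrivial.2
    ⟨⟨_, _, fun h => hab (ConnectedComponent.eq.1 h)⟩⟩

end SimpleGraph

section IntervalGraph

variable {P Q : Type*} [PartialOrder P] [PartialOrder Q]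

lemma intervalGraph_reachable_of_le {b p : P} {x y : {x : P // b < x ∧ x < p}}
    (h : (x : P) ≤ y) : (intervalGraph b p).Reachable x y := by
  rcases eq_or_ne x y with rfl | hne
  · rfl
  · exact Adj.reachable ⟨hne, Or.inl h⟩

noncomputable def OrderEmbedding.intervalGraphIso (f : P ↪o Q) {b p : P}
    (hf : ∀ x, f b < x → x < f p → x ∈ Set.range f) :
    intervalGraph b p ≃g intervalGraph (f b) (f p) where
  toEquiv := Equiv.ofBijective (fun x => ⟨f x, f.lt_iff_lt.2 x.2.1, f.lt_iff_lt.2 x.2.2⟩) <| by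
    refine ⟨fun x y h => Subtype.ext (f.injective (congrArg Subtype.val h)), ?_⟩
    rintro ⟨y, hby, hyp⟩
    obtain ⟨x, rfl⟩ := hf y hby hyp
    exact ⟨⟨x, f.lt_iff_lt.1 hby, f.lt_iff_lt.1 hyp⟩, rfl⟩
  map_rel_iff' := by
    intro x y
    simp [intervalGraph, Subtype.ext_iff, Equiv.ofBijective]

end IntervalGraph

lemma IsFinAtomic.le_iff_forall_atom_le {L : Type*} [Lattice L] [BoundedOrder L]
    (hL : IsFinAtomic L) {x y : L} : x ≤ y ↔ ∀ a, IsAtom a → a ≤ x → a ≤ y := by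
  refine ⟨fun hxy a _ hax => hax.trans hxy, fun h => ?_⟩
  rcases eq_or_ne x ⊥ with rfl | hx
  · exact bot_le
  · exact (hL x hx).2 fun a ⟨ha, hax⟩ => h a ha hax

lemma Fintype.sum_eq_add_sum_of_range_eq_compl {α β M : Type*} [Fintype α] [Fintype β]
    [AddCommMonoid M] {g : α → β} (hg : Function.Injective g) {b₀ : β}
    (hcover : ∀ b, b = b₀ ∨ ∃ a, g a = b) (hnew : ∀ a, g a ≠ b₀) (f : β → M) :
    ∑ b, f b = f b₀ + ∑ a, f (g a) := by
  classical
  have hmap : ∑ a, f (g a) = ∑ b ∈ Finset.univ.map ⟨g, hg⟩, f b :=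
    (Finset.sum_map Finset.univ ⟨g, hg⟩ f).symm
  rw [Fintype.sum_eq_add_sum_compl b₀, hmap]
  congr 2
  ext b
  simp only [Finset.mem_compl, Finset.mem_singleton, Finset.mem_map, Finset.mem_univ, true_and,
    Function.Embedding.coeFn_mk]
  rcases hcover b with rfl | ⟨a, rfl⟩
  · simpa using hnew
  · simpa using hnew a

namespace SubtreePoset

variable {V : Type*} {G : SimpleGraph V}

lemma vertexSubtree_le_iff {v : V} {r : SubtreePoset G} : vertexSubtree G v ≤ r ↔ v ∈ r.val :=
  Finset.singleton_subset_iff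

lemma emptySubtree_lt_iff {r : SubtreePoset G} : emptySubtree G < r ↔ r.val.Nonempty :=
  Finset.empty_ssubset

lemma lt_of_subset_of_card_lt {r s : SubtreePoset G} (hrs : r.val ⊆ s.val)
    (hcard : r.val.card < s.val.card) : r < s :=
  Finset.ssubset_iff_subset_ne.2 ⟨hrs, fun h => hcard.ne (h ▸ rfl)⟩

noncomputable def edgeSubtree {z z' : V} (h : G.Adj z z') : SubtreePoset G :=
  ⟨{z, z'}, by
    have hadj : (G.induce (↑({z, z'} : Finset V) : Set V)).Adj ⟨z, by simp⟩ ⟨z', by simp⟩ := h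
    rintro ⟨a, ha⟩ ⟨b, hb⟩
    simp only [Finset.coe_insert, Finset.coe_singleton, Set.mem_insert_iff,
      Set.mem_singleton_iff] at ha hb
    rcases ha with rfl | rfl <;> rcases hb with rfl | rfl
    exacts [Reachable.refl _, hadj.reachable, hadj.symm.reachable, Reachable.refl _]⟩

theorem intervalGraph_preconnected {p : SubtreePoset G} (hp : 3 ≤ p.val.card) :
    (intervalGraph (emptySubtree G) p).Preconnected := by
  have mem_interval : ∀ r : SubtreePoset G, r.val ⊆ p.val → r.val.Nonempty → r.val.card < 3 →
      emptySubtree G < r ∧ r < p := fun r hrp hr hcard =>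
    ⟨emptySubtree_lt_iff.2 hr, lt_of_subset_of_card_lt hrp (by omega)⟩
  let vertex (u : (p.val : Set V)) : {r // emptySubtree G < r ∧ r < p} :=
    ⟨vertexSubtree G u, mem_interval _ (Finset.singleton_subset_iff.2 u.2)
      (Finset.singleton_nonempty _) (by simp [vertexSubtree])⟩
  have reach_vertex : ∀ x, ∃ u, (intervalGraph (emptySubtree G) p).Reachable (vertex u) x := by
    intro x
    obtain ⟨u, hu⟩ := emptySubtree_lt_iff.1 x.2.1
    exact ⟨⟨u, x.2.2.le hu⟩, intervalGraph_reachable_of_le (vertexSubtree_le_iff.2 hu)⟩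
  have reach_edge : ∀ u w, (G.induce (p.val : Set V)).Adj u w →
      (intervalGraph (emptySubtree G) p).Reachable (vertex u) (vertex w) := by
    intro u w huw
    have hpair : ({u.1, w.1} : Finset V) ⊆ p.val := Finset.insert_subset_iff.2
      ⟨u.2, Finset.singleton_subset_iff.2 w.2⟩
    let edge : {r // emptySubtree G < r ∧ r < p} := ⟨edgeSubtree huw,
      mem_interval _ hpair (Finset.insert_nonempty _ _) ((Finset.card_le_two).trans_lt (by omega))⟩
    have hu : vertex u ≤ edge.1 := Finset.singleton_subset_iff.2 (Finset.mem_insert_self _ _)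
    have hw : vertex w ≤ edge.1 := Finset.singleton_subset_iff.2
      (Finset.mem_insert_of_mem (Finset.mem_singleton_self _))
    exact (intervalGraph_reachable_of_le hu).trans (intervalGraph_reachable_of_le hw).symm
  intro x y
  obtain ⟨u, hux⟩ := reach_vertex x
  obtain ⟨w, hwy⟩ := reach_vertex y
  exact hux.symm.trans ((Reachable.map_of_adj vertex reach_edge (p.2 u w)).trans hwy)

end SubtreePoset

section AtomsBelow

variable {V Q : Type*} [Fintype V] {G : SimpleGraph V} [PartialOrder Q] {e : SubtreePoset G ↪o Q}

noncomputable def atomsBelow (e : SubtreePoset G ↪o Q) (q : Q) : Finset V :=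
  Finset.univ.filter fun v => e (vertexSubtree G v) ≤ q

lemma mem_atomsBelow {v : V} {q : Q} : v ∈ atomsBelow e q ↔ e (vertexSubtree G v) ≤ q := by
  simp [atomsBelow]

end AtomsBelow

section Cover

open SubtreePoset

variable {V Q : Type*} {G : SimpleGraph V} [Lattice Q] [BoundedOrder Q]
  {e : SubtreePoset G ↪o Q} {q₀ : Q}

lemma le_iff_forall_vertexSubtree_le (hQ : IsFinAtomic Q)
    (hatoms : ∀ q : Q, IsAtom q ↔ ∃ v, e (vertexSubtree G v) = q) {x y : Q} :
    x ≤ y ↔ ∀ v, e (vertexSubtree G v) ≤ x → e (vertexSubtree G v) ≤ y := by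
  rw [hQ.le_iff_forall_atom_le]
  refine ⟨fun h v => h _ ((hatoms _).2 ⟨v, rfl⟩), fun h a ha => ?_⟩
  obtain ⟨v, rfl⟩ := (hatoms a).1 ha
  exact h v

variable [Fintype V]

lemma le_iff_subset_atomsBelow (hQ : IsFinAtomic Q)
    (hatoms : ∀ q : Q, IsAtom q ↔ ∃ v, e (vertexSubtree G v) = q) {r : SubtreePoset G} {q : Q} :
    e r ≤ q ↔ r.val ⊆ atomsBelow e q := by
  rw [le_iff_forall_vertexSubtree_le hQ hatoms]
  simp only [e.le_iff_le, vertexSubtree_le_iff, Finset.subset_iff, mem_atomsBelow]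

lemma atomsBelow_subset_iff_le (hQ : IsFinAtomic Q)
    (hatoms : ∀ q : Q, IsAtom q ↔ ∃ v, e (vertexSubtree G v) = q) {r : SubtreePoset G} {q : Q} :
    atomsBelow e q ⊆ r.val ↔ q ≤ e r := by
  rw [le_iff_forall_vertexSubtree_le hQ hatoms]
  simp only [e.le_iff_le, vertexSubtree_le_iff, Finset.subset_iff, mem_atomsBelow]

lemma not_preconnected_induce_atomsBelow (hQ : IsFinAtomic Q)
    (hatoms : ∀ q : Q, IsAtom q ↔ ∃ v, e (vertexSubtree G v) = q) (hnew : ∀ p, e p ≠ q₀) :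
    ¬ (G.induce (atomsBelow e q₀ : Set V)).Preconnected := fun h =>
  hnew ⟨_, h⟩ <| le_antisymm ((le_iff_subset_atomsBelow hQ hatoms).2 subset_rfl)
    ((atomsBelow_subset_iff_le hQ hatoms).1 subset_rfl)

lemma vertexSubtree_mem_interval (hatoms : ∀ q : Q, IsAtom q ↔ ∃ v, e (vertexSubtree G v) = q)
    (hnew : ∀ p, e p ≠ q₀) {v : V} (hv : v ∈ atomsBelow e q₀) :
    ⊥ < e (vertexSubtree G v) ∧ e (vertexSubtree G v) < q₀ :=
  ⟨((hatoms _).2 ⟨v, rfl⟩).bot_lt, lt_of_le_of_ne (mem_atomsBelow.1 hv) (hnew _)⟩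

theorem not_preconnected_intervalGraph_of_not_reachable (hQ : IsFinAtomic Q)
    (hatoms : ∀ q : Q, IsAtom q ↔ ∃ v, e (vertexSubtree G v) = q)
    (hcover : ∀ q : Q, q = q₀ ∨ ∃ p, e p = q) (hnew : ∀ p, e p ≠ q₀)
    (hbot : e (emptySubtree G) = ⊥) {a b : V} (ha : a ∈ atomsBelow e q₀)
    (hb : b ∈ atomsBelow e q₀)
    (hab : ¬ (G.induce (atomsBelow e q₀ : Set V)).Reachable ⟨a, ha⟩ ⟨b, hb⟩) :
    ¬ (intervalGraph (⊥ : Q) q₀).Preconnected := by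
  set S := atomsBelow e q₀
  -- lying above an atom of the component of `a` in `S` is invariant along comparabilities
  let aboveComponent (z : {x : Q // ⊥ < x ∧ x < q₀}) : Prop :=
    ∃ v, ∃ hv : v ∈ S, (G.induce (S : Set V)).Reachable ⟨a, ha⟩ ⟨v, hv⟩ ∧
      e (vertexSubtree G v) ≤ z
  refine not_preconnected_of_adj_invariant aboveComponent ?_
    (a := ⟨_, vertexSubtree_mem_interval hatoms hnew ha⟩)
    (b := ⟨_, vertexSubtree_mem_interval hatoms hnew hb⟩) ⟨a, ha, .refl _, le_rfl⟩ ?_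
  · rintro z z' ⟨-, hzz' | hz'z⟩ ⟨v, hv, hav, hvz⟩
    · exact ⟨v, hv, hav, hvz.trans hzz'⟩
    obtain ⟨r, hr⟩ := (hcover z).resolve_left z.2.2.ne
    obtain ⟨r', hr'⟩ := (hcover z').resolve_left z'.2.2.ne
    have hrS : r.val ⊆ S := (le_iff_subset_atomsBelow hQ hatoms).1 (hr ▸ z.2.2.le)
    have hr'r : r'.val ⊆ r.val := e.le_iff_le.1 (by rw [hr, hr']; exact hz'z)
    have hr'_pos : e (emptySubtree G) < e r' := by rw [hbot, hr']; exact z'.2.1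
    obtain ⟨u, hu⟩ := emptySubtree_lt_iff.1 (e.lt_iff_lt.1 hr'_pos)
    have hvr : v ∈ r.val := vertexSubtree_le_iff.1 (e.le_iff_le.1 (by rw [hr]; exact hvz))
    have hvu : (G.induce (S : Set V)).Reachable ⟨v, hv⟩ ⟨u, hrS (hr'r hu)⟩ :=
      (r.2 ⟨v, hvr⟩ ⟨u, hr'r hu⟩).map (G.induceHomOfLE (Finset.coe_subset.2 hrS)).toHom
    exact ⟨u, _, hav.trans hvu, by rw [← hr']; exact e.le_iff_le.2 (vertexSubtree_le_iff.2 hu)⟩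
  · rintro ⟨v, hv, hav, hvb⟩
    obtain rfl : v = b := Finset.mem_singleton.1 (vertexSubtree_le_iff.1 (e.le_iff_le.1 hvb))
    exact hab hav

theorem card_connectedComponent_intervalGraph_sub_one_le (hQ : IsFinAtomic Q)
    (hatoms : ∀ q : Q, IsAtom q ↔ ∃ v, e (vertexSubtree G v) = q)
    (hcover : ∀ q : Q, q = q₀ ∨ ∃ p, e p = q) (hnew : ∀ p, e p ≠ q₀)
    (hbot : e (emptySubtree G) = ⊥) (r : SubtreePoset G) :
    Nat.card (intervalGraph (emptySubtree G) r).ConnectedComponent - 1 ≤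
      Nat.card (intervalGraph (⊥ : Q) (e r)).ConnectedComponent - 1 := by
  by_cases hq₀r : q₀ ≤ e r
  · have hS := not_preconnected_induce_atomsBelow hQ hatoms hnew
    have hSr : atomsBelow e q₀ ⊂ r.val := Finset.ssubset_iff_subset_ne.2
      ⟨(atomsBelow_subset_iff_le hQ hatoms).2 hq₀r, fun h => hS (h ▸ r.2)⟩
    have hS2 : 1 < (atomsBelow e q₀).card := Finset.one_lt_card_iff_nontrivial.2
      (Set.nontrivial_coe_sort.1 (nontrivial_of_not_preconnected hS))
    have hr3 : 3 ≤ r.val.card := by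
      have := Finset.card_lt_card hSr
      omega
    have := Finite.card_le_one_iff_subsingleton.2
      (intervalGraph_preconnected hr3).subsingleton_connectedComponent
    omega
  · have hrange : ∀ x, e (emptySubtree G) < x → x < e r → x ∈ Set.range e := fun x _ hxr =>
      (hcover x).resolve_left (by rintro rfl; exact hq₀r hxr.le)
    rw [Nat.card_congr (e.intervalGraphIso hrange).connectedComponentEquiv, hbot]

end Cover

theorem stmt12_general {V Q : Type*} [Fintype V] (G : SimpleGraph V)
    [Lattice Q] [Fintype Q] [BoundedOrder Q] (hQ : IsFinAtomic Q)
    (e : SubtreePoset G ↪o Q) (q₀ : Q)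
    (hcover : ∀ q : Q, q = q₀ ∨ ∃ p, e p = q)
    (hnew : ∀ p, e p ≠ q₀)
    (hbot : e (emptySubtree G) = ⊥)
    (hatoms : ∀ q : Q, IsAtom q ↔ ∃ v, e (vertexSubtree G v) = q) :
    ({x : Q | ⊥ < x ∧ x < q₀}.Nonempty ∧
      ¬ (intervalGraph (⊥ : Q) q₀).Preconnected) ∧
    bettiTwo Q ⊥ > bettiTwo (SubtreePoset G) (emptySubtree G) := by
  obtain ⟨⟨a, ha⟩, ⟨b, hb⟩, hab⟩ : ∃ a b : (atomsBelow e q₀ : Set V),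
      ¬ (G.induce (atomsBelow e q₀ : Set V)).Reachable a b := by
    simpa [Preconnected] using not_preconnected_induce_atomsBelow hQ hatoms hnew
  have hdisc := not_preconnected_intervalGraph_of_not_reachable hQ hatoms hcover hnew hbot ha hb hab
  refine ⟨⟨⟨_, vertexSubtree_mem_interval hatoms hnew ha⟩, hdisc⟩, ?_⟩
  have hq₀ := one_lt_card_connectedComponent_of_not_preconnected hdisc
  have hle := Finset.sum_le_sum fun r (_ : r ∈ Finset.univ) =>
    card_connectedComponent_intervalGraph_sub_one_le hQ hatoms hcover hnew hbot r
  simp only [bettiTwo, Fintype.card_eq_nat_card, gt_iff_lt]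
  rw [Fintype.sum_eq_add_sum_of_range_eq_compl e.injective hcover hnew]
  omega

/-- let `T` be a tree with `n + 1` vertices and `P_T ∈ L(n+1)`
its subtree lattice.  If a finite atomic lattice `Q` covers `P_T` in `L(n+1)` —
i.e. `Q` is obtained from `P_T` by adding a single new element `q₀`, via an
order embedding `e : P_T ↪o Q` preserving the minimum and the atoms whose image
misses exactly `q₀` — then the open interval `(0̂, q₀)` in `Q` is nonempty and
its comparability graph is disconnected (so `H̃₀` of the order complex of
`(0̂, q₀)` is nonzero); consequently the total (second) Betti number of `Q` is
strictly greater than that of `P_T`. -/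
theorem stmt12 {V Q : Type*} [Fintype V] (G : SimpleGraph V)
    (hconn : G.Connected) (hacyc : G.IsAcyclic)
    (n : ℕ) (hcard : Fintype.card V = n + 1)
    [Lattice Q] [Fintype Q] [BoundedOrder Q] (hQ : IsFinAtomic Q)
    (e : SubtreePoset G ↪o Q) (q₀ : Q)
    (hcover : ∀ q : Q, q = q₀ ∨ ∃ p, e p = q)
    (hnew : ∀ p, e p ≠ q₀)
    (hbot : e (emptySubtree G) = ⊥)
    (hatoms : ∀ q : Q, IsAtom q ↔ ∃ v, e (vertexSubtree G v) = q) :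
    ({x : Q | ⊥ < x ∧ x < q₀}.Nonempty ∧
      ¬ (intervalGraph (⊥ : Q) q₀).Preconnected) ∧
    bettiTwo Q ⊥ > bettiTwo (SubtreePoset G) (emptySubtree G) :=
  stmt12_general G hQ e q₀ hcover hnew hbot hatoms
end
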